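/- Let ℓ ≥ 1 and let G be the graph obtained from K_{ℓ+2} by attaching one pendant leaf to ℓ of its vertices, and let v be one of the two clique vertices without an attached leaf. Then γ_g'(G) = γ_g'(G−v) = ℓ + 1. -/

import Mathlib

open Classical

noncomputable section

namespace DomGame

variable {V : Type*} [Fintype V]

/-- Closed neighborhood of `v` as a `Finset`. -/
noncomputable def N (G : SimpleGraph V) (v : V) : Finset V :=
  Finset.univ.filter (fun u => G.Adj v u ∨ u = v)

/-- Legal moves given the set `S` of already dominated vertices. -/
noncomputable def moves (G : SimpleGraph V) (S : Finset V) : Finset V :=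
  Finset.univ.filter (fun v => ¬ N G v ⊆ S)

lemma card_lt {G : SimpleGraph V} {S : Finset V} (v : V) (hv : v ∈ moves G S) :
    (Finset.univ \ (S ∪ N G v)).card < (Finset.univ \ S).card := by
  simp only [moves, Finset.mem_filter] at hv
  obtain ⟨u, hu, hus⟩ := Finset.not_subset.mp hv.2
  apply Finset.card_lt_card
  refine ⟨Finset.sdiff_subset_sdiff (le_refl _) Finset.subset_union_left, ?_⟩
  intro hsub
  have := hsub (Finset.mem_sdiff.mpr ⟨Finset.mem_univ u, hus⟩)
  rw [Finset.mem_sdiff, Finset.mem_union] at this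
  exact this.2 (Or.inr hu)

mutual
/-- Number of moves with optimal play when it is Dominator's turn and
`S` is the set of already dominated vertices. -/
noncomputable def gameD (G : SimpleGraph V) (S : Finset V) : ℕ :=
  if h : (moves G S).Nonempty then
    1 + (moves G S).attach.inf' (by simpa using h)
      (fun v => gameS G (S ∪ N G v.1))
  else 0
termination_by (Finset.univ \ S).card
decreasing_by exact card_lt v.1 v.2

/-- Number of moves with optimal play when it is Staller's turn. -/
noncomputable def gameS (G : SimpleGraph V) (S : Finset V) : ℕ :=
  if h : (moves G S).Nonempty then
    1 + (moves G S).attach.sup' (by simpa using h)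
      (fun v => gameD G (S ∪ N G v.1))
  else 0
termination_by (Finset.univ \ S).card
decreasing_by exact card_lt v.1 v.2
end

/-- The (Dominator-start) game domination number. -/
noncomputable def gammaG (G : SimpleGraph V) : ℕ := gameD G ∅

/-- The Staller-start game domination number. -/
noncomputable def gammaG' (G : SimpleGraph V) : ℕ := gameS G ∅

end DomGame

open DomGame

/-- The graph obtained from `K_{ℓ+2}` (on the `inl` vertices) by attaching a
pendant leaf `inr i` to the clique vertex `inl (castLE i)`, for each
`i : Fin ℓ`; so the last two clique vertices have no leaf attached. -/
noncomputable def cliqueWithSomeLeaves (l : ℕ) : SimpleGraph (Fin (l + 2) ⊕ Fin l) :=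
  SimpleGraph.fromRel (fun a b =>
    match a, b with
    | Sum.inl _, Sum.inl _ => True
    | Sum.inl i, Sum.inr j => i = Fin.castLE (by omega) j
    | _, _ => False)

/-!
Suppose the closed neighbourhood `C = N[v₀]` of some vertex is a clique and every closed
neighbourhood has at most one vertex outside `C`. Once `C` is dominated, every legal move
dominates exactly one new vertex, so from then on the game lasts exactly as many moves as
there are undominated vertices. If Staller opens with `v₀`, the game therefore lasts
`1 + |V \ C|` moves. After any other opening `u`, either `N[u] ⊇ C`, or `u ∉ C` (as `C` is a
clique) and Dominator answers `v₀`, which leaves at most `|V \ C| - 1` vertices undominated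
since `u` itself is; either way at most `|V \ C|` further moves follow.

In `K_{ℓ+2}` with `ℓ` pendant leaves take `v₀` to be the leafless clique vertex other than `v`:
then `C` is the clique and `V \ C` the `ℓ` leaves, and deleting `v ∈ C` preserves all of this.
-/
namespace DomGame

open Finset

variable {V : Type*} [Fintype V] {G : SimpleGraph V} {S C : Finset V} {u v : V}

lemma mem_N : u ∈ N G v ↔ G.Adj v u ∨ u = v := by simp [N]

lemma self_mem_N (v : V) : v ∈ N G v := mem_N.2 (Or.inr rfl)

lemma subset_N_of_isClique {s : Finset V} (hs : G.IsClique (s : Set V)) (hu : u ∈ s) :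
    s ⊆ N G u := fun x hx =>
  mem_N.2 <| (eq_or_ne x u).elim Or.inr fun hxu => Or.inl (hs hu hx hxu.symm)

lemma N_induce {s : Set V} [Fintype s] (v : s) :
    N (G.induce s) v = (N G v).subtype (· ∈ s) := by
  ext x
  simp [mem_N, Subtype.ext_iff]

lemma mem_moves : v ∈ moves G S ↔ ¬ N G v ⊆ S := by simp [moves]

lemma mem_moves_of_notMem (hv : v ∉ S) : v ∈ moves G S :=
  mem_moves.2 fun h => hv (h (self_mem_N v))

lemma gameD_univ : gameD G univ = 0 := by
  rw [gameD, dif_neg]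
  simp [moves]

lemma gameS_univ : gameS G univ = 0 := by
  rw [gameS, dif_neg]
  simp [moves]

lemma gameD_le (hv : v ∈ moves G S) : gameD G S ≤ gameS G (S ∪ N G v) + 1 := by
  rw [gameD, dif_pos ⟨v, hv⟩, add_comm]
  gcongr
  exact inf'_le (fun x : moves G S => gameS G (S ∪ N G x.1)) (mem_attach _ ⟨v, hv⟩)

lemma le_gameD {n : ℕ} (hne : (moves G S).Nonempty)
    (h : ∀ v ∈ moves G S, n ≤ gameS G (S ∪ N G v)) : n + 1 ≤ gameD G S := by
  rw [gameD, dif_pos hne, add_comm]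
  gcongr
  exact le_inf' _ _ fun x _ => h x.1 x.2

lemma gameS_le {n : ℕ} (h : ∀ v ∈ moves G S, gameD G (S ∪ N G v) ≤ n) :
    gameS G S ≤ n + 1 := by
  rw [gameS]
  split_ifs
  · rw [add_comm]
    gcongr
    exact sup'_le _ _ fun x _ => h x.1 x.2
  · omega

lemma le_gameS (hv : v ∈ moves G S) : gameD G (S ∪ N G v) + 1 ≤ gameS G S := by
  rw [gameS, dif_pos ⟨v, hv⟩, add_comm]
  gcongr
  exact le_sup' (fun x : moves G S => gameD G (S ∪ N G x.1)) (mem_attach _ ⟨v, hv⟩)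

lemma card_compl_union_N_add_one (hpriv : ∀ v, ((N G v : Set V) \ C).Subsingleton)
    (hCS : C ⊆ S) (hv : v ∈ moves G S) : #(S ∪ N G v)ᶜ + 1 = #Sᶜ := by
  have hout : ∀ x ∈ Sᶜ ∩ N G v, x ∈ (N G v : Set V) \ C := fun x hx => by
    rw [mem_inter, mem_compl] at hx
    exact ⟨hx.2, fun hxC => hx.1 (hCS hxC)⟩
  have hnew : #(Sᶜ ∩ N G v) = 1 := by
    refine le_antisymm (card_le_one.2 fun x hx y hy => hpriv v (hout x hx) (hout y hy)) ?_
    · obtain ⟨x, hxN, hxS⟩ := not_subset.1 (mem_moves.1 hv)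
      exact card_pos.2 ⟨x, mem_inter.2 ⟨mem_compl.2 hxS, hxN⟩⟩
  rw [← card_sdiff_add_card_inter Sᶜ (N G v), hnew, sdiff_eq_inter_compl, compl_union]

theorem gameD_eq_and_gameS_eq_card_compl (hpriv : ∀ v, ((N G v : Set V) \ C).Subsingleton)
    (hCS : C ⊆ S) : gameD G S = #Sᶜ ∧ gameS G S = #Sᶜ := by
  induction hn : #Sᶜ generalizing S with
  | zero =>
    obtain rfl : S = univ := (compl_eq_empty_iff S).1 (card_eq_zero.1 hn)
    exact ⟨gameD_univ, gameS_univ⟩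
  | succ n ih =>
    have next : ∀ v ∈ moves G S, gameD G (S ∪ N G v) = n ∧ gameS G (S ∪ N G v) = n :=
      fun v hv => ih (hCS.trans subset_union_left)
        (by have := card_compl_union_N_add_one hpriv hCS hv; omega)
    obtain ⟨u, hu⟩ : Sᶜ.Nonempty := card_pos.1 (by omega)
    have hmove : u ∈ moves G S := mem_moves_of_notMem (mem_compl.1 hu)
    constructor
    · refine le_antisymm ?_ (le_gameD ⟨u, hmove⟩ fun v hv => (next v hv).2.ge)
      simpa only [(next u hmove).2] using gameD_le hmove
    · refine le_antisymm (gameS_le fun v hv => (next v hv).1.le) ?_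
      simpa only [(next u hmove).1] using le_gameS hmove

theorem gammaG'_eq_card_sub_card_N_add_one (v₀ : V) (hclique : G.IsClique (N G v₀ : Set V))
    (hpriv : ∀ v, ((N G v : Set V) \ N G v₀).Subsingleton) :
    gammaG' G = Fintype.card V - #(N G v₀) + 1 := by
  rw [← card_compl]
  set C := N G v₀
  have forced {S : Finset V} (hCS : C ⊆ S) := gameD_eq_and_gameS_eq_card_compl hpriv hCS
  refine le_antisymm (gameS_le fun u _ => ?_) ?_
  · rw [empty_union]
    by_cases hCu : C ⊆ N G u
    · rw [(forced hCu).1]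
      exact card_le_card (compl_subset_compl.2 hCu)
    · have huC : u ∉ C := fun hu => hCu (subset_N_of_isClique hclique hu)
      have hlt : #(N G u ∪ C)ᶜ < #Cᶜ := card_lt_card <|
        (ssubset_iff_of_subset (compl_subset_compl.2 subset_union_right)).2
          ⟨u, mem_compl.2 huC, fun h => mem_compl.1 h (mem_union_left _ (self_mem_N u))⟩
      calc gameD G (N G u) ≤ gameS G (N G u ∪ C) + 1 := gameD_le (mem_moves.2 hCu)
        _ = #(N G u ∪ C)ᶜ + 1 := by rw [(forced subset_union_right).2]
        _ ≤ #Cᶜ := hlt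
  · have := le_gameS (G := G) (mem_moves_of_notMem (notMem_empty v₀))
    rwa [empty_union, (forced subset_rfl).1] at this

theorem gammaG'_induce_eq_card_sub_card_N_add_one {s : Set V} [Fintype s] (v₀ : s)
    (hclique : G.IsClique (N G v₀ : Set V))
    (hpriv : ∀ v, ((N G v : Set V) \ N G v₀).Subsingleton)
    (hs : ∀ x ∉ N G v₀, x ∈ s) : gammaG' (G.induce s) = Fintype.card V - #(N G v₀) + 1 := by
  rw [gammaG'_eq_card_sub_card_N_add_one v₀, N_induce, ← card_compl, ← card_compl]
  · calc _ = #((N G v₀)ᶜ.subtype (· ∈ s)) + 1 := by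
          congr 2; ext; simp
      _ = #(N G v₀)ᶜ + 1 := by
          rw [card_subtype, filter_true_of_mem fun x hx => hs x (mem_compl.1 hx)]
  · rw [N_induce]
    intro x hx y hy hxy
    exact hclique (mem_subtype.1 hx) (mem_subtype.1 hy) (Subtype.coe_ne_coe.2 hxy)
  · intro v
    rw [N_induce, N_induce]
    rintro x ⟨hxv, hxv₀⟩ y ⟨hyv, hyv₀⟩
    exact Subtype.ext (hpriv v ⟨mem_subtype.1 hxv, fun h => hxv₀ (mem_subtype.2 h)⟩
      ⟨mem_subtype.1 hyv, fun h => hyv₀ (mem_subtype.2 h)⟩)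

end DomGame

section cliqueWithSomeLeaves

open Finset

variable {l : ℕ} {i : Fin (l + 2)}

@[simp]
lemma cliqueWithSomeLeaves_adj_inl_inl {i i' : Fin (l + 2)} :
    (cliqueWithSomeLeaves l).Adj (.inl i) (.inl i') ↔ i ≠ i' := by
  simp [cliqueWithSomeLeaves]

@[simp]
lemma cliqueWithSomeLeaves_adj_inl_inr {i : Fin (l + 2)} {j : Fin l} :
    (cliqueWithSomeLeaves l).Adj (.inl i) (.inr j) ↔ i = Fin.castLE (by omega) j := by
  simp [cliqueWithSomeLeaves]

@[simp]
lemma cliqueWithSomeLeaves_not_adj_inr_inr {j j' : Fin l} :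
    ¬ (cliqueWithSomeLeaves l).Adj (.inr j) (.inr j') := by
  simp [cliqueWithSomeLeaves]

lemma N_cliqueWithSomeLeaves_inl_of_le (hi : l ≤ i) :
    N (cliqueWithSomeLeaves l) (.inl i) = univ.map .inl := by
  ext (i' | j)
  · simpa [mem_N] using (ne_or_eq i i').imp_right Eq.symm
  · simp [mem_N, Fin.ext_iff]
    omega

lemma isClique_N_cliqueWithSomeLeaves_inl_of_le (hi : l ≤ i) :
    (cliqueWithSomeLeaves l).IsClique (N (cliqueWithSomeLeaves l) (.inl i) : Set _) := by
  rw [N_cliqueWithSomeLeaves_inl_of_le hi, coe_map]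
  rintro _ ⟨j, -, rfl⟩ _ ⟨j', -, rfl⟩ hne
  exact cliqueWithSomeLeaves_adj_inl_inl.2 fun h => hne (h ▸ rfl)

lemma subsingleton_N_cliqueWithSomeLeaves_diff_N_inl (hi : l ≤ i) (v : Fin (l + 2) ⊕ Fin l) :
    ((N (cliqueWithSomeLeaves l) v : Set (Fin (l + 2) ⊕ Fin l)) \
      N (cliqueWithSomeLeaves l) (.inl i)).Subsingleton := by
  rw [N_cliqueWithSomeLeaves_inl_of_le hi]
  rintro a ⟨ha, ha'⟩ b ⟨hb, hb'⟩
  rcases v with k | k <;> rcases a with a | a <;> rcases b with b | b <;>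
    simp_all [mem_N, Fin.castLE_inj]

lemma card_N_cliqueWithSomeLeaves_inl_of_le (hi : l ≤ i) :
    #(N (cliqueWithSomeLeaves l) (.inl i)) = l + 2 := by
  simp [N_cliqueWithSomeLeaves_inl_of_le hi]

end cliqueWithSomeLeaves

/-- For `ℓ ≥ 1`, `G` the graph obtained from `K_{ℓ+2}` by attaching one pendant
leaf to `ℓ` of its vertices, and `v` one of the two clique vertices without a
leaf, `γ_g'(G) = γ_g'(G−v) = ℓ + 1`. -/
theorem gameS_clique_with_some_leaves (l : ℕ) (hl : 1 ≤ l) :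
    gammaG' (cliqueWithSomeLeaves l) = l + 1 ∧
    gammaG' ((cliqueWithSomeLeaves l).induce
      {(Sum.inl (Fin.last (l + 1)) : Fin (l + 2) ⊕ Fin l)}ᶜ) = l + 1 := by
  let i : Fin (l + 2) := ⟨l, by omega⟩
  have hi : l ≤ i := le_rfl
  have hclique := isClique_N_cliqueWithSomeLeaves_inl_of_le hi
  have hpriv := subsingleton_N_cliqueWithSomeLeaves_diff_N_inl hi
  have hleaves : Fintype.card (Fin (l + 2) ⊕ Fin l) - (N (cliqueWithSomeLeaves l) (.inl i)).card
      + 1 = l + 1 := by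
    simp [card_N_cliqueWithSomeLeaves_inl_of_le hi]
  have hv : ∀ x ∉ N (cliqueWithSomeLeaves l) (.inl i), x ≠ .inl (Fin.last (l + 1)) := by
    rintro x hx rfl
    exact hx (by simp [N_cliqueWithSomeLeaves_inl_of_le hi])
  exact ⟨(gammaG'_eq_card_sub_card_N_add_one _ hclique hpriv).trans hleaves,
    (gammaG'_induce_eq_card_sub_card_N_add_one ⟨.inl i, by simp [i, Fin.ext_iff]⟩
      hclique hpriv hv).trans hleaves⟩
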